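/- With notation as above (det(I - A·z) = d_{N-r}·∏_k (z-θ_k)^{e_k} of degree N-r, partial fraction coefficients A_{k,j}), the coefficient m_{N-2-r} of z^{N-2-r} in sum(adj(I - A·z)·A) satisfies m_{N-2-r} = ∑_{k=1}^n A_{k,2} - ∑_{k=1}^n A_{k,1}·(θ_1 e_1 + ... + θ_k (e_k - 1) + ... + θ_n e_n), where A_{k,2} is taken to be 0 when e_k = 1. -/

import Mathlib

open Polynomial Matrix

def sumEntries {R : Type*} [AddCommMonoid R] {N : ℕ} (M : Matrix (Fin N) (Fin N) R) : R :=
  ∑ i, ∑ j, M i j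

/-- `det(I - A·z)` over `ℂ`. -/
noncomputable def detIsubAz {N : ℕ} (A : Matrix (Fin N) (Fin N) ℂ) : ℂ[X] :=
  ((1 : Matrix (Fin N) (Fin N) ℂ[X]) - (X : ℂ[X]) • A.map C).det

/-- `sum(adj(I - A·z)·A)` over `ℂ`. -/
noncomputable def sumAdjIsubAzA {N : ℕ} (A : Matrix (Fin N) (Fin N) ℂ) : ℂ[X] :=
  sumEntries (adjugate ((1 : Matrix (Fin N) (Fin N) ℂ[X]) - (X : ℂ[X]) • A.map C) * A.map C)

open Finset

/-!
Clearing denominators with `F = ∏ (X - θ_k)^{e_k}`, monic of degree `m = ∑ e_k`, turns the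
partial fraction identity into `P = ∑_{k,j} A_{k,j} · F / (X - θ_k)^j`. Each `F / (X - θ_k)^j` is
monic of degree `m - j`, so its `X^{m-2}` coefficient is `0` for `j ≥ 3` and `1` for `j = 2`; for
`j = 1` it is the subleading coefficient, which by `F = (X - θ_k) · F / (X - θ_k)` equals
`-∑ e_l θ_l + θ_k`.
-/

theorem sum_Icc_one_eq_of_eq_zero {M : Type*} [AddCommMonoid M] {n : ℕ} (hn : 1 ≤ n)
    (g : ℕ → M) (h2 : n = 1 → g 2 = 0) (hg : ∀ j ∈ Icc 3 n, g j = 0) :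
    ∑ j ∈ Icc 1 n, g j = g 1 + g 2 := by
  rcases hn.eq_or_lt with rfl | hn
  · simp [h2 rfl]
  · rw [← sum_subset (Icc_subset_Icc_right hn) fun j hj hj' => hg j ?_]
    · simp [show Icc 1 2 = {1, 2} by decide]
    · simp only [mem_Icc] at hj hj' ⊢; omega

section ProdXSubCPow

variable {R : Type*} [CommRing R] {ι : Type*} [Fintype ι] (θ : ι → R) (e : ι → ℕ)

theorem monic_prod_X_sub_C_pow : (∏ l, (X - C (θ l)) ^ (e l)).Monic :=
  monic_prod_of_monic _ _ fun _ _ => (monic_X_sub_C _).pow _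

theorem nextCoeff_prod_X_sub_C_pow :
    (∏ l, (X - C (θ l)) ^ (e l)).nextCoeff = -∑ l, (e l : R) * θ l := by
  rw [Monic.nextCoeff_prod _ _ fun _ _ => (monic_X_sub_C _).pow _]
  simp only [(monic_X_sub_C _).nextCoeff_pow, nextCoeff_X_sub_C, nsmul_eq_mul, mul_neg,
    sum_neg_distrib]

theorem natDegree_prod_X_sub_C_pow [Nontrivial R] :
    (∏ l, (X - C (θ l)) ^ (e l)).natDegree = ∑ l, e l := by
  rw [natDegree_prod_of_monic _ _ fun _ _ => (monic_X_sub_C _).pow _]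
  simp only [(monic_X_sub_C _).natDegree_pow, natDegree_X_sub_C, mul_one]

variable [DecidableEq ι] {k : ι} {j : ℕ}

/-- `F / (X - θ k)^j` for `F = ∏ l, (X - θ l)^(e l)`, provided `j ≤ e k`. -/
noncomputable def cofactor (k : ι) (j : ℕ) : R[X] :=
  (X - C (θ k)) ^ (e k - j) * ∏ l ∈ univ.erase k, (X - C (θ l)) ^ (e l)

theorem monic_cofactor : (cofactor θ e k j).Monic :=
  ((monic_X_sub_C _).pow _).mul (monic_prod_of_monic _ _ fun _ _ => (monic_X_sub_C _).pow _)

theorem X_sub_C_pow_mul_cofactor (hj : j ≤ e k) :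
    (X - C (θ k)) ^ j * cofactor θ e k j = ∏ l, (X - C (θ l)) ^ (e l) := by
  rw [cofactor, ← mul_assoc, ← pow_add, Nat.add_sub_cancel' hj,
    mul_prod_erase univ (fun l => (X - C (θ l)) ^ e l) (mem_univ k)]

variable [Nontrivial R]

theorem natDegree_cofactor (hj : j ≤ e k) : (cofactor θ e k j).natDegree = ∑ l, e l - j := by
  have h := congrArg natDegree (X_sub_C_pow_mul_cofactor θ e hj)
  rw [((monic_X_sub_C _).pow _).natDegree_mul (monic_cofactor θ e),
    (monic_X_sub_C _).natDegree_pow, natDegree_X_sub_C, mul_one,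
    natDegree_prod_X_sub_C_pow] at h
  omega

theorem coeff_cofactor_one (hk : 1 ≤ e k) (h2 : 2 ≤ ∑ l, e l) :
    (cofactor θ e k 1).coeff (∑ l, e l - 2) = -(∑ l, (e l : R) * θ l - θ k) := by
  have hnext := congrArg nextCoeff (X_sub_C_pow_mul_cofactor θ e hk)
  rw [pow_one, (monic_X_sub_C _).nextCoeff_mul (monic_cofactor θ e), nextCoeff_X_sub_C,
    nextCoeff_prod_X_sub_C_pow,
    nextCoeff_of_natDegree_pos (by rw [natDegree_cofactor θ e hk]; omega),
    natDegree_cofactor θ e hk] at hnext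
  rw [show ∑ l, e l - 2 = ∑ l, e l - 1 - 1 by omega]
  linear_combination hnext

theorem coeff_cofactor_two (hk : 2 ≤ e k) : (cofactor θ e k 2).coeff (∑ l, e l - 2) = 1 := by
  rw [← natDegree_cofactor θ e hk, (monic_cofactor θ e).coeff_natDegree]

theorem coeff_cofactor_of_three_le (hj : 3 ≤ j) (hk : j ≤ e k) :
    (cofactor θ e k j).coeff (∑ l, e l - 2) = 0 := by
  have := single_le_sum (fun l _ => Nat.zero_le (e l)) (mem_univ k)
  exact coeff_eq_zero_of_natDegree_lt (by rw [natDegree_cofactor θ e hk]; omega)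

theorem coeff_sum_Icc_C_mul_cofactor (a : ℕ → R)
    (hk : 1 ≤ e k) (ha2 : e k = 1 → a 2 = 0) (h2 : 2 ≤ ∑ l, e l) :
    (∑ j ∈ Icc 1 (e k), C (a j) * cofactor θ e k j).coeff (∑ l, e l - 2)
      = a 2 - a 1 * (∑ l, (e l : R) * θ l - θ k) := by
  have hterm2 : a 2 * (cofactor θ e k 2).coeff (∑ l, e l - 2) = a 2 := by
    rcases hk.eq_or_lt with h | h
    · simp [ha2 h.symm]
    · rw [coeff_cofactor_two θ e h, mul_one]
  simp only [finsetSum_coeff, coeff_C_mul]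
  rw [sum_Icc_one_eq_of_eq_zero hk _ (fun h => by simp [ha2 h])
      fun j hj => by rw [coeff_cofactor_of_three_le θ e (mem_Icc.mp hj).1 (mem_Icc.mp hj).2,
        mul_zero],
    hterm2, coeff_cofactor_one θ e hk h2]
  ring

end ProdXSubCPow

theorem eq_sum_C_mul_cofactor_of_div_eq {K : Type*} [Field K] {ι : Type*} [Fintype ι]
    [DecidableEq ι] (θ : ι → K) (e : ι → ℕ) (P : K[X]) {d : K} (hd : d ≠ 0) (a : ι → ℕ → K)
    (h : algebraMap K[X] (RatFunc K) P
          / algebraMap K[X] (RatFunc K) (C d * ∏ l, (X - C (θ l)) ^ (e l))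
        = RatFunc.C d⁻¹ * ∑ k, ∑ j ∈ Icc 1 (e k),
            RatFunc.C (a k j) / (RatFunc.X - RatFunc.C (θ k)) ^ j) :
    P = ∑ k, ∑ j ∈ Icc 1 (e k), C (a k j) * cofactor θ e k j := by
  set φ := algebraMap K[X] (RatFunc K)
  have hφinj : Function.Injective φ := IsFractionRing.injective _ _
  have hφ_X_sub_C (c : K) : φ (X - C c) = RatFunc.X - RatFunc.C c := by
    rw [map_sub, RatFunc.algebraMap_X, RatFunc.algebraMap_C]
  have hcofactor (k : ι) {j : ℕ} (hj : j ≤ e k) : φ (cofactor θ e k j)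
      = φ (∏ l, (X - C (θ l)) ^ (e l)) / (RatFunc.X - RatFunc.C (θ k)) ^ j := by
    have hne : (RatFunc.X - RatFunc.C (θ k)) ^ j ≠ 0 := by
      rw [← hφ_X_sub_C, ← map_pow]
      exact (map_ne_zero_iff φ hφinj).mpr (pow_ne_zero _ (X_sub_C_ne_zero _))
    rw [eq_div_iff hne, ← X_sub_C_pow_mul_cofactor θ e hj, map_mul, map_pow, hφ_X_sub_C,
      mul_comm]
  have hD : φ (C d * ∏ l, (X - C (θ l)) ^ (e l)) ≠ 0 :=
    (map_ne_zero_iff φ hφinj).mpr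
      (mul_ne_zero (C_ne_zero.mpr hd) (monic_prod_X_sub_C_pow θ e).ne_zero)
  apply hφinj
  rw [(div_eq_iff hD).mp h, map_mul, RatFunc.algebraMap_C, ← mul_assoc,
    mul_comm _ (RatFunc.C d), ← mul_assoc, ← map_mul, mul_inv_cancel₀ hd, map_one, one_mul,
    sum_mul, map_sum]
  refine sum_congr rfl fun k _ => ?_
  rw [sum_mul, map_sum]
  refine sum_congr rfl fun j hj => ?_
  rw [map_mul, RatFunc.algebraMap_C, hcofactor k (mem_Icc.mp hj).2]
  ring

theorem stmt14_general {N n r : ℕ} (A : Matrix (Fin N) (Fin N) ℤ)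
    (θ : Fin n → ℂ) (e : Fin n → ℕ) (he : ∀ k, 1 ≤ e k)
    (d : ℂ) (hd : d ≠ 0) (hr : r + 2 ≤ N)
    (hdegdet : (detIsubAz (A.map ((↑) : ℤ → ℂ))).natDegree = N - r)
    (hfact : detIsubAz (A.map ((↑) : ℤ → ℂ)) = C d * ∏ k, (X - C (θ k)) ^ (e k))
    (Acoef : Fin n → ℕ → ℂ) (hA2 : ∀ k, e k = 1 → Acoef k 2 = 0)
    (hpf : algebraMap ℂ[X] (RatFunc ℂ) (sumAdjIsubAzA (A.map ((↑) : ℤ → ℂ)))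
          / algebraMap ℂ[X] (RatFunc ℂ) (detIsubAz (A.map ((↑) : ℤ → ℂ)))
        = RatFunc.C d⁻¹ * ∑ k, ∑ j ∈ Finset.Icc 1 (e k),
            RatFunc.C (Acoef k j) / (RatFunc.X - RatFunc.C (θ k)) ^ j) :
    (sumAdjIsubAzA (A.map ((↑) : ℤ → ℂ))).coeff (N - 2 - r)
      = ∑ k, Acoef k 2 - ∑ k, Acoef k 1 * ((∑ l, (e l : ℂ) * θ l) - θ k) := by
  have hdeg_sum : ∑ l, e l = N - r := by
    rwa [hfact, natDegree_C_mul hd, natDegree_prod_X_sub_C_pow] at hdegdet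
  rw [hfact] at hpf
  rw [eq_sum_C_mul_cofactor_of_div_eq θ e _ hd Acoef hpf, show N - 2 - r = ∑ l, e l - 2 by omega,
    finsetSum_coeff, ← sum_sub_distrib]
  exact sum_congr rfl fun k _ =>
    coeff_sum_Icc_C_mul_cofactor θ e (Acoef k) (he k) (hA2 k) (by omega)

/-- With `det(I - A·z) = d·∏ (z-θ_k)^{e_k}` of degree `N-r` and partial fraction coefficients
`A_{k,j}`, the coefficient `m_{N-2-r}` of `z^{N-2-r}` in `sum(adj(I - A·z)·A)` equals
`∑_k A_{k,2} - ∑_k A_{k,1}·(θ_1 e_1 + ⋯ + θ_k (e_k - 1) + ⋯ + θ_n e_n)` (where `A_{k,2} = 0`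
when `e_k = 1`). -/
theorem stmt14 {N n r : ℕ} (A : Matrix (Fin N) (Fin N) ℤ)
    (θ : Fin n → ℂ) (hθ : Function.Injective θ) (e : Fin n → ℕ) (he : ∀ k, 1 ≤ e k)
    (d : ℂ) (hd : d ≠ 0) (hr : r + 2 ≤ N)
    (hdegdet : (detIsubAz (A.map ((↑) : ℤ → ℂ))).natDegree = N - r)
    (hfact : detIsubAz (A.map ((↑) : ℤ → ℂ)) = C d * ∏ k, (X - C (θ k)) ^ (e k))
    (hdeg : (sumAdjIsubAzA (A.map ((↑) : ℤ → ℂ))).natDegree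
      < (detIsubAz (A.map ((↑) : ℤ → ℂ))).natDegree)
    (Acoef : Fin n → ℕ → ℂ) (hA2 : ∀ k, e k = 1 → Acoef k 2 = 0)
    (hpf : algebraMap ℂ[X] (RatFunc ℂ) (sumAdjIsubAzA (A.map ((↑) : ℤ → ℂ)))
          / algebraMap ℂ[X] (RatFunc ℂ) (detIsubAz (A.map ((↑) : ℤ → ℂ)))
        = RatFunc.C d⁻¹ * ∑ k, ∑ j ∈ Finset.Icc 1 (e k),
            RatFunc.C (Acoef k j) / (RatFunc.X - RatFunc.C (θ k)) ^ j) :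
    (sumAdjIsubAzA (A.map ((↑) : ℤ → ℂ))).coeff (N - 2 - r)
      = ∑ k, Acoef k 2 - ∑ k, Acoef k 1 * ((∑ l, (e l : ℂ) * θ l) - θ k) :=
  stmt14_general A θ e he d hd hr hdegdet hfact Acoef hA2 hpf
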